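/- The characters I_{m,m}(t,y) = t^m(χ_m(y) - tχ_{m-1}(y)) for m ≥ 0 and I_{m,n}(t,y) = t^m[(1+t^2)χ_n(y) - t(χ_{n+1}(y)+χ_{n-1}(y))] for m > n ≥ 0 are invariant under y ↦ 1/y, and the family {I_{m,m} : m ≥ 0} ∪ {I_{m,n} : m > n ≥ 0} is linearly independent over ℚ in the ring of Laurent polynomials in t and y. -/

import Mathlib

open Finset LaurentPolynomial

/-- The su(2) character `χ_n(y)` over a field, with `χ_n = 0` for `n < 0`. -/
noncomputable def chi {K : Type*} [Field K] (n : ℤ) (y : K) : K :=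
  if n < 0 then 0 else ∑ j ∈ Finset.range (n.toNat + 1), y ^ (n - 2 * (j : ℤ))

/-- Half-BPS character `I_{m,m}(t,y) = t^m (χ_m(y) - t χ_{m-1}(y))`. -/
noncomputable def Imm {K : Type*} [Field K] (m : ℕ) (t y : K) : K :=
  t ^ m * (chi (m : ℤ) y - t * chi ((m : ℤ) - 1) y)

/-- 1/4-BPS character
`I_{m,n}(t,y) = t^m [(1+t²) χ_n(y) - t (χ_{n+1}(y) + χ_{n-1}(y))]`. -/
noncomputable def Imn {K : Type*} [Field K] (m n : ℕ) (t y : K) : K :=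
  t ^ m * ((1 + t ^ 2) * chi (n : ℤ) y
    - t * (chi ((n : ℤ) + 1) y + chi ((n : ℤ) - 1) y))

/-- Laurent polynomials in two variables `t` (outer) and `y` (inner),
over `ℚ`. -/
abbrev A : Type := LaurentPolynomial (LaurentPolynomial ℚ)

/-- The su(2) character `χ_n(y)` as a Laurent polynomial in `y`. -/
noncomputable def chiB (n : ℤ) : LaurentPolynomial ℚ :=
  if n < 0 then 0
  else ∑ j ∈ Finset.range (n.toNat + 1), T (n - 2 * (j : ℤ))

/-- `I_{m,m}(t,y)` as a (Laurent) polynomial in `t` and `y`. -/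
noncomputable def ImmL (m : ℕ) : A :=
  T (m : ℤ) * (LaurentPolynomial.C (chiB (m : ℤ))
    - T 1 * LaurentPolynomial.C (chiB ((m : ℤ) - 1)))

/-- `I_{m,n}(t,y)` as a (Laurent) polynomial in `t` and `y`. -/
noncomputable def ImnL (m n : ℕ) : A :=
  T (m : ℤ) * ((1 + T 2) * LaurentPolynomial.C (chiB (n : ℤ))
    - T 1 * LaurentPolynomial.C (chiB ((n : ℤ) + 1) + chiB ((n : ℤ) - 1)))

/-! The substitution `y ↦ y⁻¹` only reverses the order of summation in `χ_n`, so every character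
is symmetric. For independence, the character indexed by `(m, n)` has lowest `t`-power `t^m`, with
coefficient `χ_n(y)`, whose highest `y`-power is `y^n` with coefficient `1`. Ordering the indices
lexicographically by `m` and then by decreasing `n`, the coefficient of `t^m y^n` vanishes on all
later characters and is `1` on the `(m, n)`-th one: the family is unitriangular, for every pair
`(m, n)` and not only for `n ≤ m`. -/

lemma chi_inv {K : Type*} [Field K] (n : ℤ) (y : K) : chi n y⁻¹ = chi n y := by
  unfold chi
  split_ifs with hn
  · rfl
  rw [← Finset.sum_range_reflect]
  refine Finset.sum_congr rfl fun j hj => ?_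
  rw [Finset.mem_range] at hj
  rw [inv_zpow, ← zpow_neg]
  congr 1
  omega

theorem LinearIndependent.of_dual_triangular {ι κ R M : Type*} [LinearOrder κ] [Ring R]
    [AddCommGroup M] [Module R M] (v : ι → M) (f : ι → Module.Dual R M) (key : ι → κ)
    (hkey : Function.Injective key) (h_lt : ∀ i j, key i < key j → f i (v j) = 0)
    (h_diag : ∀ i, f i (v i) = 1) : LinearIndependent R v := by
  classical
  let _ := LinearOrder.lift' key hkey
  rw [linearIndependent_iff']
  intro s
  induction s using Finset.induction_on_min with
  | empty => simp
  | insert a s ha ih =>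
    intro g hg
    have has : a ∉ s := fun h => lt_irrefl a (ha a h)
    rw [Finset.sum_insert has] at hg
    have hga : g a = 0 := by
      have hrest : ∑ x ∈ s, g x * f a (v x) = 0 :=
        Finset.sum_eq_zero fun x hx => by rw [h_lt a x (ha x hx), mul_zero]
      simpa [h_diag, hrest] using congr_arg (f a) hg
    rw [hga, zero_smul, zero_add] at hg
    intro i hi
    rcases Finset.mem_insert.1 hi with rfl | hi
    · exact hga
    · exact ih g hg i hi

lemma coeff_chiB_of_le {n k : ℤ} (hn : 0 ≤ n) (hk : n ≤ k) :
    (chiB n).coeff k = if k = n then 1 else 0 := by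
  rw [chiB, if_neg (not_lt.2 hn), AddMonoidAlgebra.coeff_sum, Finsupp.finsetSum_apply,
    Finset.sum_eq_single 0]
  · simp only [T, AddMonoidAlgebra.coeff_single, Finsupp.single_apply]
    simp [eq_comm]
  · intro j _ hj
    simp only [T, AddMonoidAlgebra.coeff_single, Finsupp.single_apply]
    exact if_neg (by omega)
  · simp

lemma coeff_T_mul_C {R : Type*} [Semiring R] (a : ℤ) (r : R) :
    (T a * C r : R[T;T⁻¹]).coeff = Finsupp.single a r := by
  rw [T_mul, ← single_eq_C_mul_T, AddMonoidAlgebra.coeff_single]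

lemma coeff_ImmL (m : ℕ) : (ImmL m).coeff =
    Finsupp.single (m : ℤ) (chiB m) - Finsupp.single ((m : ℤ) + 1) (chiB ((m : ℤ) - 1)) := by
  rw [ImmL, mul_sub, ← mul_assoc, ← T_add, AddMonoidAlgebra.coeff_sub, coeff_T_mul_C,
    coeff_T_mul_C, add_comm]

lemma coeff_ImnL (m n : ℕ) : (ImnL m n).coeff =
    Finsupp.single (m : ℤ) (chiB n) + Finsupp.single ((m : ℤ) + 2) (chiB n)
      - Finsupp.single ((m : ℤ) + 1) (chiB ((n : ℤ) + 1) + chiB ((n : ℤ) - 1)) := by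
  rw [ImnL, mul_sub, add_mul, one_mul, mul_add, ← mul_assoc, ← mul_assoc, ← T_add, ← T_add,
    AddMonoidAlgebra.coeff_sub, AddMonoidAlgebra.coeff_add, coeff_T_mul_C, coeff_T_mul_C,
    coeff_T_mul_C]

noncomputable def character (p : ℕ × ℕ) : A :=
  if p.1 = p.2 then ImmL p.1 else ImnL p.1 p.2

lemma coeff_character_of_le (m n : ℕ) {k : ℤ} (hk : k ≤ m) :
    (character (m, n)).coeff k = if k = m then chiB n else 0 := by
  rcases eq_or_ne m n with rfl | h
  · simp only [character, if_true, coeff_ImmL, Finsupp.sub_apply, Finsupp.single_apply]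
    split_ifs <;> first | omega | simp
  · simp only [character, if_neg h, coeff_ImnL, Finsupp.sub_apply, Finsupp.add_apply,
      Finsupp.single_apply]
    split_ifs <;> first | omega | simp

@[simps]
noncomputable def coeff₂ {R : Type*} [CommSemiring R] (a b : ℤ) :
    Module.Dual R R[T;T⁻¹][T;T⁻¹] where
  toFun p := (p.coeff a).coeff b
  map_add' p q := by simp
  map_smul' c p := by simp

theorem linearIndependent_character : LinearIndependent ℚ character := by
  refine LinearIndependent.of_dual_triangular character (fun p => coeff₂ p.1 p.2)
    (fun p => toLex (p.1, OrderDual.toDual p.2))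
    (fun p q h => by simpa [Prod.ext_iff] using h) ?_ ?_
  · rintro ⟨m, n⟩ ⟨m', n'⟩ h
    rw [Prod.Lex.toLex_lt_toLex, OrderDual.toDual_lt_toDual] at h
    rw [coeff₂_apply, coeff_character_of_le m' n' (by omega)]
    rcases h with hm | ⟨rfl, hn⟩
    · rw [if_neg (by omega)]
      rfl
    · rw [if_pos rfl, coeff_chiB_of_le (by positivity) (by omega), if_neg (by omega)]
  · rintro ⟨m, n⟩
    rw [coeff₂_apply, coeff_character_of_le m n le_rfl, if_pos rfl,
      coeff_chiB_of_le (by positivity) le_rfl, if_pos rfl]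

/-- The characters `I_{m,m}` (for `m ≥ 0`) and `I_{m,n}` (for `m > n ≥ 0`)
are invariant under `y ↦ 1/y`, and the whole family is linearly independent
over `ℚ` in the ring of Laurent polynomials in `t` and `y`. -/
theorem characters_symmetric_and_linearly_independent :
    (∀ (K : Type) (_ : Field K) (t y : K), t ≠ 0 → y ≠ 0 →
      (∀ m : ℕ, Imm m t y = Imm m t y⁻¹) ∧
      (∀ m n : ℕ, n < m → Imn m n t y = Imn m n t y⁻¹)) ∧
    LinearIndependent ℚ
      (fun p : {p : ℕ × ℕ // p.2 ≤ p.1} =>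
        if p.1.1 = p.1.2 then ImmL p.1.1 else ImnL p.1.1 p.1.2) := by
  refine ⟨fun K _ t y _ _ => ⟨fun m => ?_, fun m n _ => ?_⟩,
    linearIndependent_character.comp Subtype.val Subtype.val_injective⟩
  · simp only [Imm, chi_inv]
  · simp only [Imn, chi_inv]
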